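/- Let n ≥ 1 and D ≥ 3 be integers, k a real number, and set β_p = −2^p·(p−1)·binom(n,p)·(D(D−1)/(D−2))^p for 0 ≤ p ≤ n. For a > 0, F > 0 and v, w, u ∈ ℝ define Γ(a,v,w,F,u) = (D−2)·(2kF² + 2Fv² + a·v·u − 2a·w·F)/(2a²F²D), Σ(a,v,w,F,u) = (D−1)·((D−2)kF² + (D−2)Fv² − a·v·u + 2a·w·F)/(a²F²), and L̂(a,v,w,F,u) = √F · a^{D−1} · Σ_{p=0}^n β_p·Γ(a,v,w,F,u)^p·Σ(a,v,w,F,u)^{n−p}. Let a : ℝ → ℝ be three times differentiable with a(t) > 0 for all t. Then for every t: (∂L̂/∂F)(a(t),ȧ(t),ä(t),1,0) − (d/dt)[ s ↦ (∂L̂/∂u)(a(s),ȧ(s),ä(s),1,0) ](t) = (a(t)^{D−1}/(2D))·(D−2n)·(D(D−1)(k + ȧ(t)²)/a(t)²)^n, where ∂L̂/∂F and ∂L̂/∂u denote the partial derivatives of L̂ in its fourth and fifth arguments. -/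

import Mathlib

/-!
Put `c = D(D-1)/(D-2)` and `Y = 2cΓ`. Then `β_p Γ^p = (1-p) C(n,p) Y^p`, so the binomial theorem
and its derivative collapse the sum to `X^n - n Y X^(n-1)` with
`X = Y + Σ = D(D-1)(k + v²/F)/x²`, which involves neither the shift `u` nor `ä`. Hence `L̂` is
affine in `u`, its momentum at `F = 1` is `-n(D-1) a^(D-2) ȧ X^(n-1)`, and the Euler–Lagrange
combination is a direct computation in which the `n(n-1) X^(n-2)` contributions of the lapse
derivative and of the time derivative of the momentum cancel, leaving `(a^(D-1)/2D)(D-2n) X^n`.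
-/

open Finset

theorem sum_range_mul_choose_mul_pow {R : Type*} [CommRing R] (n : ℕ) (y s : R) :
    ∑ p ∈ range (n + 1), (p * n.choose p : R) * y ^ p * s ^ (n - p)
      = n * y * (y + s) ^ (n - 1) := by
  cases n with
  | zero => simp
  | succ m =>
    rw [sum_range_succ', add_pow, mul_sum]
    simp only [Nat.cast_zero, zero_mul, add_zero, add_tsub_cancel_right]
    refine sum_congr rfl fun p _ => ?_
    have h := congrArg (Nat.cast : ℕ → R) (Nat.add_one_mul_choose_eq m p)
    push_cast at h
    rw [Nat.add_sub_add_right, pow_succ]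
    push_cast
    linear_combination -(y ^ p * y * s ^ (m - p)) * h

theorem sum_range_one_sub_mul_choose_mul_pow {R : Type*} [CommRing R] (n : ℕ) (y s : R) :
    ∑ p ∈ range (n + 1), ((1 - p) * n.choose p : R) * y ^ p * s ^ (n - p)
      = (y + s) ^ n - n * y * (y + s) ^ (n - 1) := by
  rw [← sum_range_mul_choose_mul_pow, add_pow, ← sum_sub_distrib]
  exact sum_congr rfl fun p _ => by ring

theorem natCast_mul_pow_eq {R : Type*} [CommSemiring R] (n : ℕ) (x : R) :
    (n : R) * x ^ n = n * (x * x ^ (n - 1)) := by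
  cases n <;> simp [pow_succ']

section CosmologicalGravity

variable (n D : ℕ) (k : ℝ)

noncomputable def cosmologicalCoeff (p : ℕ) : ℝ :=
  -(2 : ℝ) ^ p * ((p : ℝ) - 1) * (n.choose p : ℝ) *
    ((D : ℝ) * ((D : ℝ) - 1) / ((D : ℝ) - 2)) ^ p

-- `x, v, w` stand for `a, ȧ, ä`, `F` is the lapse and `u` stands for `Ḟ`.
noncomputable def flrwGamma (x v w F u : ℝ) : ℝ :=
  ((D : ℝ) - 2) * (2 * k * F ^ 2 + 2 * F * v ^ 2 + x * v * u - 2 * x * w * F) /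
    (2 * x ^ 2 * F ^ 2 * (D : ℝ))

noncomputable def flrwSigma (x v w F u : ℝ) : ℝ :=
  ((D : ℝ) - 1) * (((D : ℝ) - 2) * k * F ^ 2 + ((D : ℝ) - 2) * F * v ^ 2
      - x * v * u + 2 * x * w * F) / (x ^ 2 * F ^ 2)

noncomputable def reducedLagrangian (x v w F u : ℝ) : ℝ :=
  √F * x ^ (D - 1) *
    ∑ p ∈ range (n + 1), cosmologicalCoeff n D p * flrwGamma D k x v w F u ^ p *
      flrwSigma D k x v w F u ^ (n - p)

noncomputable def hubbleTerm (x v F : ℝ) : ℝ :=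
  D * (D - 1) / x ^ 2 * (k + v ^ 2 / F)

noncomputable def scaledGamma (x v w F u : ℝ) : ℝ :=
  (D - 1) / x ^ 2 * (2 * k + 2 * (v ^ 2 - x * w) / F + x * v * u / F ^ 2)

variable {n D k}

theorem cosmologicalCoeff_mul_pow (p : ℕ) (g : ℝ) :
    cosmologicalCoeff n D p * g ^ p =
      (1 - p) * n.choose p * (2 * ((D : ℝ) * ((D : ℝ) - 1) / ((D : ℝ) - 2)) * g) ^ p := by
  rw [cosmologicalCoeff, mul_pow, mul_pow]
  ring

theorem two_mul_flrwGamma (hD : 3 ≤ D) {x F : ℝ} (hx : x ≠ 0) (hF : F ≠ 0) (v w u : ℝ) :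
    2 * ((D : ℝ) * ((D : ℝ) - 1) / ((D : ℝ) - 2)) * flrwGamma D k x v w F u =
      scaledGamma D k x v w F u := by
  have hD2 : (D : ℝ) - 2 ≠ 0 := by
    have : (3 : ℝ) ≤ D := by exact_mod_cast hD
    linarith
  have hD0 : (D : ℝ) ≠ 0 := by positivity
  rw [flrwGamma, scaledGamma]
  field_simp
  ring

theorem scaledGamma_add_flrwSigma {x F : ℝ} (hx : x ≠ 0) (hF : F ≠ 0) (v w u : ℝ) :
    scaledGamma D k x v w F u + flrwSigma D k x v w F u = hubbleTerm D k x v F := by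
  rw [flrwSigma, scaledGamma, hubbleTerm]
  field_simp
  ring

theorem reducedLagrangian_eq (hD : 3 ≤ D) {x F : ℝ} (hx : x ≠ 0) (hF : F ≠ 0) (v w u : ℝ) :
    reducedLagrangian n D k x v w F u =
      √F * x ^ (D - 1) * (hubbleTerm D k x v F ^ n
        - n * scaledGamma D k x v w F u * hubbleTerm D k x v F ^ (n - 1)) := by
  simp only [reducedLagrangian, cosmologicalCoeff_mul_pow, two_mul_flrwGamma hD hx hF,
    sum_range_one_sub_mul_choose_mul_pow, scaledGamma_add_flrwSigma hx hF]

theorem hubbleTerm_one (x v : ℝ) :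
    hubbleTerm D k x v 1 = D * (D - 1) * (k + v ^ 2) / x ^ 2 := by
  rw [hubbleTerm, div_one]
  ring

theorem hasDerivAt_hubbleTerm_lapse (x v : ℝ) :
    HasDerivAt (fun F => hubbleTerm D k x v F) (-(D * (D - 1) * v ^ 2 / x ^ 2)) 1 :=
  ((((hasDerivAt_const 1 (v ^ 2)).div (hasDerivAt_id' (1 : ℝ)) one_ne_zero).const_add k).const_mul
    ((D : ℝ) * (D - 1) / x ^ 2)).congr_deriv (by ring)

theorem hasDerivAt_scaledGamma_lapse (x v w : ℝ) :
    HasDerivAt (fun F => scaledGamma D k x v w F 0)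
      (-(2 * (D - 1) * (v ^ 2 - x * w) / x ^ 2)) 1 := by
  have h := (((hasDerivAt_const (1 : ℝ) (2 * (v ^ 2 - x * w))).div (hasDerivAt_id' (1 : ℝ))
    one_ne_zero).const_add (2 * k)).const_mul (((D : ℝ) - 1) / x ^ 2)
  simp only [scaledGamma, mul_zero, zero_div, add_zero]
  exact h.congr_deriv (by ring)

theorem hasDerivAt_scaledGamma_shift {x : ℝ} (hx : x ≠ 0) (v w : ℝ) :
    HasDerivAt (fun u => scaledGamma D k x v w 1 u) ((D - 1) * v / x) 0 := by
  have h := ((((hasDerivAt_id' 0).const_mul (x * v)).div_const (1 ^ 2)).const_add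
    (2 * k + 2 * (v ^ 2 - x * w) / 1)).const_mul (((D : ℝ) - 1) / x ^ 2)
  exact h.congr_deriv (by field_simp)

theorem hasDerivAt_reducedLagrangian_lapse (hD : 3 ≤ D) {x : ℝ} (hx : x ≠ 0) (v w : ℝ) :
    HasDerivAt (fun F => reducedLagrangian n D k x v w F 0)
      (x ^ (D - 1) * ((hubbleTerm D k x v 1 ^ n
          - n * scaledGamma D k x v w 1 0 * hubbleTerm D k x v 1 ^ (n - 1)) / 2
        - n * (hubbleTerm D k x v 1 ^ (n - 1) - scaledGamma D k x v w 1 0 *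
            ((n - 1 : ℕ) * hubbleTerm D k x v 1 ^ (n - 1 - 1))) * (D * (D - 1) * v ^ 2 / x ^ 2)
        + n * hubbleTerm D k x v 1 ^ (n - 1) * (2 * (D - 1) * (v ^ 2 - x * w) / x ^ 2))) 1 := by
  have hX := hasDerivAt_hubbleTerm_lapse (D := D) (k := k) x v
  have hY := hasDerivAt_scaledGamma_lapse (D := D) (k := k) x v w
  have h := ((Real.hasDerivAt_sqrt one_ne_zero).mul_const (x ^ (D - 1))).mul
    ((hX.pow n).sub ((hY.const_mul (n : ℝ)).mul (hX.pow (n - 1))))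
  refine (h.congr_deriv ?_).congr_of_eventuallyEq ?_
  · simp only [Pi.mul_apply, Pi.sub_apply, Pi.pow_apply, Real.sqrt_one]
    ring
  · filter_upwards [eventually_ne_nhds one_ne_zero] with F hF
    exact reducedLagrangian_eq hD hx hF v w 0

theorem hasDerivAt_reducedLagrangian_shift (hD : 3 ≤ D) {x : ℝ} (hx : x ≠ 0) (v w : ℝ) :
    HasDerivAt (fun u => reducedLagrangian n D k x v w 1 u)
      (-(n * (D - 1)) * (x ^ (D - 1) * (v / x) * hubbleTerm D k x v 1 ^ (n - 1))) 0 := by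
  have h := ((hasDerivAt_const (0 : ℝ) (hubbleTerm D k x v 1 ^ n)).sub
    (((hasDerivAt_scaledGamma_shift (D := D) (k := k) hx v w).const_mul (n : ℝ)).mul_const
      (hubbleTerm D k x v 1 ^ (n - 1)))).const_mul (√1 * x ^ (D - 1))
  rw [funext fun u => reducedLagrangian_eq hD hx one_ne_zero v w u]
  exact h.congr_deriv (by rw [Real.sqrt_one]; field_simp; ring)

theorem hasDerivAt_hubbleTerm_comp {a b : ℝ → ℝ} {t w : ℝ} (ha : HasDerivAt a (b t) t)
    (hb : HasDerivAt b w t) (ha0 : a t ≠ 0) :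
    HasDerivAt (fun s => hubbleTerm D k (a s) (b s) 1)
      (2 * D * (D - 1) * b t * (a t * w - k - b t ^ 2) / a t ^ 3) t := by
  have h := ((hasDerivAt_const t ((D : ℝ) * (D - 1))).div (ha.pow 2) (pow_ne_zero 2 ha0)).mul
    (((hb.pow 2).div_const 1).const_add k)
  refine h.congr_deriv ?_
  simp only [Pi.pow_apply, Pi.div_apply]
  field_simp
  ring

-- Up to the factor `-n(D-1)`, this is the momentum `∂L̂/∂u` at `F = 1` along `(a, ȧ) = (a, b)`.
theorem hasDerivAt_momentum (hD : 2 ≤ D) {a b : ℝ → ℝ} {t w : ℝ} (ha : HasDerivAt a (b t) t)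
    (hb : HasDerivAt b w t) (ha0 : a t ≠ 0) (m : ℕ) :
    HasDerivAt (fun s => a s ^ (D - 1) * (b s / a s) * hubbleTerm D k (a s) (b s) 1 ^ m)
      (a t ^ (D - 1) / a t ^ 2 * (((D - 2) * b t ^ 2 + a t * w) * hubbleTerm D k (a t) (b t) 1 ^ m
        + m * hubbleTerm D k (a t) (b t) 1 ^ (m - 1) *
          (2 * D * (D - 1) * b t ^ 2 * (a t * w - k - b t ^ 2) / a t ^ 2))) t := by
  have h := ((ha.pow (D - 1)).mul (hb.div ha ha0)).mul
    ((hasDerivAt_hubbleTerm_comp (D := D) (k := k) ha hb ha0).pow m)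
  refine h.congr_deriv ?_
  obtain ⟨e, rfl⟩ : ∃ e, D = e + 1 + 1 := ⟨D - 2, by omega⟩
  simp only [Pi.pow_apply, Pi.mul_apply, Pi.div_apply, Nat.add_sub_cancel]
  push_cast
  field_simp
  ring

end CosmologicalGravity

theorem stmt_11 (n D : ℕ) (hD : 3 ≤ D) (k : ℝ)
    (a : ℝ → ℝ) (ha : ∀ t, 0 < a t)
    (h1 : Differentiable ℝ a) (h2 : Differentiable ℝ (deriv a)) :
    let β : ℕ → ℝ := fun p =>
      -(2 : ℝ) ^ p * ((p : ℝ) - 1) * (n.choose p : ℝ) *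
        ((D : ℝ) * ((D : ℝ) - 1) / ((D : ℝ) - 2)) ^ p
    let G : ℝ → ℝ → ℝ → ℝ → ℝ → ℝ := fun x v w F u =>
      ((D : ℝ) - 2) * (2 * k * F ^ 2 + 2 * F * v ^ 2 + x * v * u - 2 * x * w * F) /
        (2 * x ^ 2 * F ^ 2 * (D : ℝ))
    let S : ℝ → ℝ → ℝ → ℝ → ℝ → ℝ := fun x v w F u =>
      ((D : ℝ) - 1) * (((D : ℝ) - 2) * k * F ^ 2 + ((D : ℝ) - 2) * F * v ^ 2
          - x * v * u + 2 * x * w * F) / (x ^ 2 * F ^ 2)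
    let Lhat : ℝ → ℝ → ℝ → ℝ → ℝ → ℝ := fun x v w F u =>
      Real.sqrt F * x ^ (D - 1) *
        ∑ p ∈ Finset.range (n + 1), β p * G x v w F u ^ p * S x v w F u ^ (n - p)
    ∀ t : ℝ,
      deriv (fun F' => Lhat (a t) (deriv a t) (deriv (deriv a) t) F' 0) 1
        - deriv (fun s => deriv (fun u' => Lhat (a s) (deriv a s) (deriv (deriv a) s) 1 u') 0) t
      = a t ^ (D - 1) / (2 * (D : ℝ)) * (((D : ℝ) - 2 * (n : ℝ)) *
          ((D : ℝ) * ((D : ℝ) - 1) * (k + (deriv a t) ^ 2) / (a t) ^ 2) ^ n) := by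
  intro β G S Lhat t
  have hL : Lhat = reducedLagrangian n D k := rfl
  have hmomentum := fun s => (hasDerivAt_reducedLagrangian_shift (n := n) (k := k) hD (ha s).ne'
    (deriv a s) (deriv (deriv a) s)).deriv
  rw [hL, funext hmomentum, (hasDerivAt_reducedLagrangian_lapse hD (ha t).ne' _ _).deriv,
    ((hasDerivAt_momentum (by omega) (h1 t).hasDerivAt (h2 t).hasDerivAt (ha t).ne'
      (n - 1)).const_mul _).deriv, ← hubbleTerm_one]
  have hpow := natCast_mul_pow_eq n (hubbleTerm D k (a t) (deriv a t) 1)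
  generalize hubbleTerm D k (a t) (deriv a t) 1 ^ n = P at hpow ⊢
  generalize hubbleTerm D k (a t) (deriv a t) 1 ^ (n - 1) = Q at hpow ⊢
  rw [hubbleTerm_one] at hpow
  rw [show ((D : ℝ) - 2 * n) * P = D * P - 2 * (n * P) by ring, hpow]
  have hD0 : (D : ℝ) ≠ 0 := by positivity
  have hx := (ha t).ne'
  simp only [scaledGamma]
  field_simp
  ring
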